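/- arXiv:1504.02887 — 2 statements merged into one kernel-verified Lean document; each statement's English description precedes it below -/
import Mathlib

section
/- Let d ≥ 1 and n ≥ 1 be integers and let C : ℝ^d → ℝ be d times continuously differentiable on an open set containing [0,1]^d. Then for every u = (u_1,…,u_d) with u_j ∈ (0,1) for all j, the d-fold mixed partial derivative ∂^d/∂u_1⋯∂u_d of the map u ↦ C(u_1^{1/n},…,u_d^{1/n})^n equals n^{−d} (∏_{j=1}^d u_j)^{1/n−1} · ∑_{j=1}^{min(d,n)} [ (n!/(n−j)!) · C(u_1^{1/n},…,u_d^{1/n})^{n−j} · ∑_{𝒫∈𝒮_{d,j}} ∏_{M∈𝒫} ∂_M C(u_1^{1/n},…,u_d^{1/n}) ]. (This is the density of the copula C_{M^{(n)}}(u) = C(u_1^{1/n},…,u_d^{1/n})^n of the vector of componentwise block-maxima of block-size n.) -/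
open scoped Classical

noncomputable section

/-- Partial derivative of `f : ℝ^d → ℝ` with respect to the `i`-th coordinate. -/
def coordPartial {d : ℕ} (i : Fin d) (f : (Fin d → ℝ) → ℝ) : (Fin d → ℝ) → ℝ :=
  fun x => deriv (fun t => f (Function.update x i t)) (x i)

/-- Mixed partial derivative `∂_M f`, taken once with respect to each coordinate in `M`
(in increasing order of the indices). -/
def mixedPartial {d : ℕ} (M : Finset (Fin d)) (f : (Fin d → ℝ) → ℝ) : (Fin d → ℝ) → ℝ :=
  (M.sort (· ≤ ·)).foldr coordPartial f

/-- The iterated mixed partial derivative `∂^k/∂u₁⋯∂u_k` with respect to the first `k`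
coordinates. -/
def iterPartial {d : ℕ} (k : ℕ) (f : (Fin d → ℝ) → ℝ) : (Fin d → ℝ) → ℝ :=
  ((List.finRange d).take k).foldr coordPartial f

/-- `𝒮_{s,j}`: the set of set-partitions of the ground set `s` into exactly `j` nonempty
blocks, encoded as finsets of pairwise disjoint nonempty blocks whose union is `s`. -/
def setPartitions {d : ℕ} (s : Finset (Fin d)) (j : ℕ) : Finset (Finset (Finset (Fin d))) :=
  Finset.univ.filter fun P =>
    (↑P : Set (Finset (Fin d))).PairwiseDisjoint id ∧
    (∀ M ∈ P, M.Nonempty) ∧ P.sup id = s ∧ P.card = j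

/-!
The substitution `u ↦ u^{1/n}` acts on each coordinate separately, so by the chain rule
`∂_s (g ∘ root)(u) = ∏_{i ∈ s} (1/n) u_i^{1/n - 1} · (∂_s g)(u^{1/n})`; this is the prefactor.
The rest is the multivariate Faà di Bruno formula
`∂_s (φ ∘ C) = ∑_P φ^{(|P|)}(C) ∏_{M ∈ P} ∂_M C`, the sum running over all set partitions `P`
of `s`. It is proved by induction on `s`, adding its least coordinate `m`: differentiating a
term of the sum either raises the order of `φ` and creates the new block `{m}`, or puts `m`
into one of the existing blocks, and these two moves produce every partition of `insert m s`
exactly once. For `φ(x) = xⁿ`, `φ^{(j)}(x) = n!/(n-j)! x^{n-j}` vanishes for `j > n`, which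
cuts the sum over the number of blocks down to `1 ≤ j ≤ min d n`.
-/

open Finset Topology

section SetPartitions

variable {α : Type*} [Fintype α] [DecidableEq α]

def allSetPartitions (s : Finset α) : Finset (Finset (Finset α)) :=
  Finset.univ.filter fun P =>
    (↑P : Set (Finset α)).PairwiseDisjoint id ∧ (∀ M ∈ P, M.Nonempty) ∧ P.sup id = s

variable {s t N M : Finset α} {P : Finset (Finset α)}

theorem mem_allSetPartitions :
    P ∈ allSetPartitions s ↔
      (↑P : Set (Finset α)).PairwiseDisjoint id ∧ (∀ M ∈ P, M.Nonempty) ∧ P.sup id = s := by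
  simp [allSetPartitions]

theorem subset_of_mem_allSetPartitions (hP : P ∈ allSetPartitions s) (hM : M ∈ P) : M ⊆ s :=
  (mem_allSetPartitions.1 hP).2.2 ▸ le_sup (f := id) hM

theorem card_le_of_mem_allSetPartitions (hP : P ∈ allSetPartitions s) : P.card ≤ s.card := by
  obtain ⟨hdisj, hne, hsup⟩ := mem_allSetPartitions.1 hP
  calc P.card = ∑ _M ∈ P, 1 := by simp
    _ ≤ ∑ M ∈ P, M.card := sum_le_sum fun M hM => card_pos.2 (hne M hM)
    _ = (P.biUnion id).card := (card_biUnion fun M hM N hN hMN => hdisj hM hN hMN).symm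
    _ = s.card := by rw [← sup_eq_biUnion, hsup]

theorem allSetPartitions_empty : allSetPartitions (∅ : Finset α) = {∅} := by
  ext P
  rw [mem_allSetPartitions, mem_singleton]
  constructor
  · rintro ⟨-, hne, hsup⟩
    exact eq_empty_of_forall_notMem fun M hM =>
      (hne M hM).ne_empty (subset_empty.1 (hsup ▸ le_sup (f := id) hM))
  · rintro rfl
    simp

theorem notMem_of_disjoint_of_mem_allSetPartitions (hP : P ∈ allSetPartitions s) (hN : N.Nonempty)
    (hNs : Disjoint N s) : N ∉ P := fun hNP =>
  hN.ne_empty (disjoint_self.1 (hNs.mono_right (subset_of_mem_allSetPartitions hP hNP)))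

theorem erase_mem_allSetPartitions (hP : P ∈ allSetPartitions s) (hM : M ∈ P) :
    P.erase M ∈ allSetPartitions (s \ M) := by
  obtain ⟨hdisj, hne, hsup⟩ := mem_allSetPartitions.1 hP
  have hsplit : s = M ∪ (P.erase M).sup id := by
    rw [← hsup, ← insert_erase hM, sup_insert, erase_insert (notMem_erase M P)]; rfl
  have hMdisj : Disjoint M ((P.erase M).sup id) :=
    Finset.disjoint_sup_right.2 fun N hN => hdisj hM (mem_of_mem_erase hN) (ne_of_mem_erase hN).symm
  refine mem_allSetPartitions.2
    ⟨hdisj.subset (by simp), fun N hN => hne N (mem_of_mem_erase hN), ?_⟩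
  rw [hsplit, union_sdiff_cancel_left hMdisj]

theorem insert_mem_allSetPartitions (hP : P ∈ allSetPartitions s) (hN : N.Nonempty)
    (hNs : Disjoint N s) : insert N P ∈ allSetPartitions (N ∪ s) := by
  obtain ⟨hdisj, hne, hsup⟩ := mem_allSetPartitions.1 hP
  refine mem_allSetPartitions.2 ⟨?_, ?_, by rw [sup_insert, hsup]; rfl⟩
  · rw [coe_insert]
    exact hdisj.insert fun M hM _ => hNs.mono_right (subset_of_mem_allSetPartitions hP hM)
  · intro M hM
    rcases mem_insert.1 hM with rfl | hM
    exacts [hN, hne M hM]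

variable {R : Type*} [AddCommMonoid R] {m : α}

theorem sum_allSetPartitions_insert_filter_singleton_mem (hm : m ∉ t)
    (F : Finset (Finset α) → R) :
    ∑ Q ∈ allSetPartitions (insert m t) with {m} ∈ Q, F Q =
      ∑ P ∈ allSetPartitions t, F (insert {m} P) := by
  have hdisj : Disjoint {m} t := disjoint_singleton_left.2 hm
  refine sum_nbij' (erase · {m}) (insert {m}) (fun Q hQ => ?_) (fun P hP => ?_)
    (fun Q hQ => insert_erase (mem_filter.1 hQ).2) (fun P hP => ?_) (fun Q hQ => ?_)
  · obtain ⟨hQ, hmQ⟩ := mem_filter.1 hQ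
    have := erase_mem_allSetPartitions hQ hmQ
    rwa [sdiff_singleton_eq_erase, erase_insert hm] at this
  · refine mem_filter.2 ⟨?_, mem_insert_self _ _⟩
    rw [insert_eq]
    exact insert_mem_allSetPartitions hP (singleton_nonempty m) hdisj
  · exact erase_insert (notMem_of_disjoint_of_mem_allSetPartitions hP (singleton_nonempty m) hdisj)
  · rw [insert_erase (mem_filter.1 hQ).2]

theorem insert_insert_erase_mem_allSetPartitions (hm : m ∉ t) (hP : P ∈ allSetPartitions t)
    (hM : M ∈ P) : insert (insert m M) (P.erase M) ∈ allSetPartitions (insert m t) := by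
  have hMt : M ⊆ t := subset_of_mem_allSetPartitions hP hM
  have hdisj : Disjoint (insert m M) (t \ M) :=
    disjoint_insert_left.2 ⟨fun h => hm (mem_sdiff.1 h).1, disjoint_sdiff⟩
  have hQ := insert_mem_allSetPartitions (erase_mem_allSetPartitions hP hM)
    (insert_nonempty m M) hdisj
  rwa [insert_union, union_sdiff_of_subset hMt] at hQ

theorem singleton_notMem_insert_insert_erase (hm : m ∉ t) (hP : P ∈ allSetPartitions t)
    (hM : M ∈ P) : {m} ∉ insert (insert m M) (P.erase M) := by
  intro hmem
  rcases mem_insert.1 hmem with h | h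
  · obtain ⟨x, hx⟩ := (mem_allSetPartitions.1 hP).2.1 M hM
    have hxm : x = m := mem_singleton.1 (h ▸ mem_insert_of_mem hx)
    exact hm (subset_of_mem_allSetPartitions hP hM (hxm ▸ hx))
  · exact hm (subset_of_mem_allSetPartitions hP (mem_of_mem_erase h) (mem_singleton_self m))

theorem eq_of_insert_insert_erase_eq (hm : m ∉ t) {P₁ P₂ : Finset (Finset α)} {M₁ M₂ : Finset α}
    (hP₁ : P₁ ∈ allSetPartitions t) (hM₁ : M₁ ∈ P₁) (hP₂ : P₂ ∈ allSetPartitions t)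
    (hM₂ : M₂ ∈ P₂) (h : insert (insert m M₁) (P₁.erase M₁) = insert (insert m M₂) (P₂.erase M₂)) :
    P₁ = P₂ ∧ M₁ = M₂ := by
  have hfree₁ : ∀ M ∈ P₁, m ∉ M := fun M hM h => hm (subset_of_mem_allSetPartitions hP₁ hM h)
  have hfree₂ : ∀ M ∈ P₂, m ∉ M := fun M hM h => hm (subset_of_mem_allSetPartitions hP₂ hM h)
  have hB₁ : insert m M₁ ∉ P₁.erase M₁ := fun h =>
    hfree₁ _ (mem_of_mem_erase h) (mem_insert_self m M₁)
  have hB₂ : insert m M₂ ∉ P₂.erase M₂ := fun h =>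
    hfree₂ _ (mem_of_mem_erase h) (mem_insert_self m M₂)
  have hB : insert m M₁ = insert m M₂ := by
    have : insert m M₂ ∈ insert (insert m M₁) (P₁.erase M₁) := h ▸ mem_insert_self _ _
    rcases mem_insert.1 this with h' | h'
    · exact h'.symm
    · exact absurd (mem_insert_self m M₂) (hfree₁ _ (mem_of_mem_erase h'))
  have hM : M₁ = M₂ := by
    rw [← erase_insert (hfree₁ M₁ hM₁), hB, erase_insert (hfree₂ M₂ hM₂)]
  have hE : P₁.erase M₁ = P₂.erase M₂ := by
    rw [← erase_insert hB₁, h, hB, erase_insert hB₂]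
  exact ⟨by rw [← insert_erase hM₁, ← insert_erase hM₂, hE, hM], hM⟩

theorem exists_insert_insert_erase_eq (hm : m ∉ t) {Q : Finset (Finset α)}
    (hQ : Q ∈ allSetPartitions (insert m t)) (hmQ : {m} ∉ Q) :
    ∃ P ∈ allSetPartitions t, ∃ M ∈ P, insert (insert m M) (P.erase M) = Q := by
  obtain ⟨B, hB, hmB⟩ : ∃ B ∈ Q, m ∈ B :=
    mem_sup.1 ((mem_allSetPartitions.1 hQ).2.2 ▸ mem_insert_self m t)
  have hBsub := subset_of_mem_allSetPartitions hQ hB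
  have hMne : (B.erase m).Nonempty := by
    rw [nonempty_iff_ne_empty, Ne, erase_eq_empty_iff, not_or]
    exact ⟨ne_empty_of_mem hmB, fun h => hmQ (h ▸ hB)⟩
  have hrest := erase_mem_allSetPartitions hQ hB
  have hdisj : Disjoint (B.erase m) (insert m t \ B) :=
    disjoint_of_subset_left (erase_subset m B) disjoint_sdiff
  have ht : B.erase m ∪ (insert m t \ B) = t := by
    ext x
    have := @hBsub x
    simp only [mem_union, mem_erase, mem_sdiff, mem_insert] at this ⊢
    grind
  refine ⟨insert (B.erase m) (Q.erase B), ht ▸ insert_mem_allSetPartitions hrest hMne hdisj,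
    B.erase m, mem_insert_self _ _, ?_⟩
  rw [erase_insert (notMem_of_disjoint_of_mem_allSetPartitions hrest hMne hdisj),
    insert_erase hmB, insert_erase hB]

theorem sum_allSetPartitions_insert_filter_singleton_notMem (hm : m ∉ t)
    (F : Finset (Finset α) → R) :
    ∑ Q ∈ allSetPartitions (insert m t) with {m} ∉ Q, F Q =
      ∑ P ∈ allSetPartitions t, ∑ M ∈ P, F (insert (insert m M) (P.erase M)) := by
  rw [sum_sigma']
  refine (sum_bij (fun x _ => insert (insert m x.2) (x.1.erase x.2)) ?_ ?_ ?_
    fun _ _ => rfl).symm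
  · rintro ⟨P, M⟩ hx
    obtain ⟨hP, hM⟩ : P ∈ allSetPartitions t ∧ M ∈ P := mem_sigma.1 hx
    exact mem_filter.2 ⟨insert_insert_erase_mem_allSetPartitions hm hP hM,
      singleton_notMem_insert_insert_erase hm hP hM⟩
  · rintro ⟨P₁, M₁⟩ h₁ ⟨P₂, M₂⟩ h₂ h
    obtain ⟨hP₁, hM₁⟩ : P₁ ∈ allSetPartitions t ∧ M₁ ∈ P₁ := mem_sigma.1 h₁
    obtain ⟨hP₂, hM₂⟩ : P₂ ∈ allSetPartitions t ∧ M₂ ∈ P₂ := mem_sigma.1 h₂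
    obtain ⟨rfl, rfl⟩ := eq_of_insert_insert_erase_eq hm hP₁ hM₁ hP₂ hM₂ h
    rfl
  · intro Q hQ
    obtain ⟨P, hP, M, hM, rfl⟩ := exists_insert_insert_erase_eq hm (mem_filter.1 hQ).1
      (mem_filter.1 hQ).2
    exact ⟨⟨P, M⟩, mem_sigma.2 ⟨hP, hM⟩, rfl⟩

theorem sum_allSetPartitions_insert (hm : m ∉ t) (F : Finset (Finset α) → R) :
    ∑ Q ∈ allSetPartitions (insert m t), F Q =
      ∑ P ∈ allSetPartitions t,
        (F (insert {m} P) + ∑ M ∈ P, F (insert (insert m M) (P.erase M))) := by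
  rw [sum_add_distrib, ← sum_filter_add_sum_filter_not _ (fun Q => {m} ∈ Q),
    sum_allSetPartitions_insert_filter_singleton_mem hm,
    sum_allSetPartitions_insert_filter_singleton_notMem hm]

end SetPartitions

theorem setPartitions_eq_filter_card {d : ℕ} (s : Finset (Fin d)) (j : ℕ) :
    setPartitions s j = (allSetPartitions s).filter (·.card = j) := by
  ext P
  simp [setPartitions, allSetPartitions, and_assoc]

theorem sum_allSetPartitions_eq_sum_Icc {d : ℕ} {R : Type*} [AddCommMonoid R]
    {s : Finset (Fin d)} (hs : s.Nonempty) (F : Finset (Finset (Fin d)) → R) :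
    ∑ P ∈ allSetPartitions s, F P = ∑ j ∈ Icc 1 s.card, ∑ P ∈ setPartitions s j, F P := by
  simp_rw [setPartitions_eq_filter_card]
  refine (sum_fiberwise_of_maps_to (fun P hP => mem_Icc.2 ⟨?_, ?_⟩) F).symm
  · rw [Nat.one_le_iff_ne_zero, Ne, card_eq_zero]
    rintro rfl
    exact hs.ne_empty ((mem_allSetPartitions.1 hP).2.2.symm.trans sup_empty)
  · exact card_le_of_mem_allSetPartitions hP

section MixedPartials

variable {d : ℕ}

theorem mixedPartial_empty (f : (Fin d → ℝ) → ℝ) : mixedPartial ∅ f = f := by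
  simp [mixedPartial]

theorem mixedPartial_insert_of_lt {m : Fin d} {M : Finset (Fin d)} (hm : ∀ a ∈ M, m < a)
    (f : (Fin d → ℝ) → ℝ) :
    mixedPartial (insert m M) f = coordPartial m (mixedPartial M f) := by
  rw [mixedPartial, sort_insert _ (fun a ha => (hm a ha).le) fun h => lt_irrefl m (hm m h),
    List.foldr_cons, mixedPartial]

theorem mixedPartial_singleton (m : Fin d) (f : (Fin d → ℝ) → ℝ) :
    mixedPartial {m} f = coordPartial m f := by
  rw [← insert_empty, mixedPartial_insert_of_lt (by simp), mixedPartial_empty]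

theorem iterPartial_eq_mixedPartial_univ (f : (Fin d → ℝ) → ℝ) :
    iterPartial d f = mixedPartial univ f := by
  rw [iterPartial, mixedPartial, List.take_of_length_le (by simp), Fin.sort_univ]

theorem hasDerivAt_update_coordPartial {f : (Fin d → ℝ) → ℝ} {x : Fin d → ℝ} (i : Fin d)
    (hf : DifferentiableAt ℝ f x) :
    HasDerivAt (fun t => f (Function.update x i t)) (coordPartial i f x) (x i) := by
  refine (DifferentiableAt.comp (x i) ?_ (hasDerivAt_update x i (x i)).differentiableAt).hasDerivAt
  rwa [Function.update_eq_self]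

theorem eventually_update_mem {U : Set (Fin d → ℝ)} (hU : IsOpen U) {x : Fin d → ℝ} (hx : x ∈ U)
    (i : Fin d) : ∀ᶠ t in 𝓝 (x i), Function.update x i t ∈ U :=
  (continuous_const.update i continuous_id).continuousAt.preimage_mem_nhds
    (hU.mem_nhds (show Function.update x i (x i) ∈ U by rwa [Function.update_eq_self]))

variable {U : Set (Fin d → ℝ)}

theorem contDiffOn_coordPartial (hU : IsOpen U) {f : (Fin d → ℝ) → ℝ} {k : ℕ}
    (hf : ContDiffOn ℝ (k + 1 : ℕ) f U) (i : Fin d) :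
    ContDiffOn ℝ k (coordPartial i f) U := by
  have hfderiv : ContDiffOn ℝ k (fun x => fderiv ℝ f x (Pi.single i 1)) U :=
    (ContinuousLinearMap.apply ℝ ℝ (Pi.single i 1 : Fin d → ℝ)).contDiff.comp_contDiffOn
      (hf.fderiv_of_isOpen hU (by norm_cast))
  refine hfderiv.congr fun x hx => ?_
  have hfx : DifferentiableAt ℝ f x :=
    (hf.differentiableOn (by norm_cast) x hx).differentiableAt (hU.mem_nhds hx)
  have hfx' : HasFDerivAt f (fderiv ℝ f x) (Function.update x i (x i)) := by
    rw [Function.update_eq_self]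
    exact hfx.hasFDerivAt
  exact (hasDerivAt_update_coordPartial i hfx).unique
    (hfx'.comp_hasDerivAt (x i) (hasDerivAt_update x i (x i)))

theorem contDiffOn_foldr_coordPartial (hU : IsOpen U) (l : List (Fin d))
    {f : (Fin d → ℝ) → ℝ} {k : ℕ} (hf : ContDiffOn ℝ (k + l.length : ℕ) f U) :
    ContDiffOn ℝ k (l.foldr coordPartial f) U := by
  induction l generalizing k with
  | nil => simpa using hf
  | cons i l ih =>
    refine contDiffOn_coordPartial hU (ih ?_) i
    rwa [List.length_cons, ← add_assoc, add_right_comm] at hf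

theorem differentiableAt_mixedPartial (hU : IsOpen U) {f : (Fin d → ℝ) → ℝ} {n : ℕ}
    (hf : ContDiffOn ℝ n f U) {M : Finset (Fin d)} (hM : M.card < n) {x : Fin d → ℝ}
    (hx : x ∈ U) : DifferentiableAt ℝ (mixedPartial M f) x := by
  have hM' : ContDiffOn ℝ (n - M.card : ℕ) (mixedPartial M f) U :=
    contDiffOn_foldr_coordPartial hU _ (by rwa [length_sort, Nat.sub_add_cancel hM.le])
  exact (hM'.differentiableOn (by exact_mod_cast (Nat.sub_pos_of_lt hM).ne') x hx).differentiableAt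
    (hU.mem_nhds hx)

end MixedPartials

theorem hasDerivAt_iteratedDeriv {φ : ℝ → ℝ} {n k : ℕ} (hφ : ContDiff ℝ n φ) (hk : k < n)
    (y : ℝ) : HasDerivAt (iteratedDeriv k φ) (iteratedDeriv (k + 1) φ y) y := by
  rw [iteratedDeriv_succ]
  exact (hφ.differentiable_iteratedDeriv k (by exact_mod_cast hk) y).hasDerivAt

section FaaDiBruno

variable {d : ℕ} {U : Set (Fin d → ℝ)} {φ : ℝ → ℝ} {C : (Fin d → ℝ) → ℝ}

theorem hasDerivAt_update_iteratedDeriv_mul_prod_mixedPartial (hU : IsOpen U) {n : ℕ}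
    (hφ : ContDiff ℝ n φ) (hC : ContDiffOn ℝ n C U) {w : Fin d → ℝ} (hw : w ∈ U) (m : Fin d)
    {P : Finset (Finset (Fin d))} (hPn : P.card < n) (hP : ∀ M ∈ P, M.card < n) :
    HasDerivAt
      (fun x => iteratedDeriv P.card φ (C (Function.update w m x)) *
        ∏ M ∈ P, mixedPartial M C (Function.update w m x))
      (iteratedDeriv (P.card + 1) φ (C w) * coordPartial m C w * ∏ M ∈ P, mixedPartial M C w +
        iteratedDeriv P.card φ (C w) *
          ∑ M ∈ P, (∏ M' ∈ P.erase M, mixedPartial M' C w) * coordPartial m (mixedPartial M C) w)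
      (w m) := by
  have hCw : C (Function.update w m (w m)) = C w := by rw [Function.update_eq_self]
  have hCdiff : DifferentiableAt ℝ C w := by
    simpa [mixedPartial_empty] using
      differentiableAt_mixedPartial hU hC (M := ∅) (by rw [card_empty]; omega) hw
  have houter := (hasDerivAt_iteratedDeriv hφ hPn (C (Function.update w m (w m)))).comp (w m)
    (hasDerivAt_update_coordPartial m hCdiff)
  have hprod := HasDerivAt.fun_finsetProd fun M hM =>
    hasDerivAt_update_coordPartial (x := w) m (differentiableAt_mixedPartial hU hC (hP M hM) hw)
  rw [hCw] at houter
  refine (houter.fun_mul hprod).congr_deriv ?_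
  simp only [Function.update_eq_self, Function.comp_apply, smul_eq_mul]

theorem mixedPartial_comp_eq_sum_allSetPartitions (hU : IsOpen U) (s : Finset (Fin d))
    (hφ : ContDiff ℝ s.card φ) (hC : ContDiffOn ℝ s.card C U) {w : Fin d → ℝ} (hw : w ∈ U) :
    mixedPartial s (fun v => φ (C v)) w =
      ∑ P ∈ allSetPartitions s, iteratedDeriv P.card φ (C w) * ∏ M ∈ P, mixedPartial M C w := by
  induction s using Finset.induction_on_min generalizing w with
  | empty => simp [mixedPartial_empty, allSetPartitions_empty]
  | insert m t hlt ih =>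
    have hmt : m ∉ t := fun h => lt_irrefl m (hlt m h)
    rw [card_insert_of_notMem hmt] at hφ hC
    have hterm : ∀ P ∈ allSetPartitions t, HasDerivAt
        (fun x => iteratedDeriv P.card φ (C (Function.update w m x)) *
          ∏ M ∈ P, mixedPartial M C (Function.update w m x)) _ (w m) := fun P hP =>
      hasDerivAt_update_iteratedDeriv_mul_prod_mixedPartial hU hφ hC hw m
        (Nat.lt_succ_of_le (card_le_of_mem_allSetPartitions hP))
        fun M hM => Nat.lt_succ_of_le (card_le_card (subset_of_mem_allSetPartitions hP hM))
    have hexpand : (fun x => mixedPartial t (fun v => φ (C v)) (Function.update w m x)) =ᶠ[𝓝 (w m)]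
        fun x => ∑ P ∈ allSetPartitions t, iteratedDeriv P.card φ (C (Function.update w m x)) *
          ∏ M ∈ P, mixedPartial M C (Function.update w m x) := by
      filter_upwards [eventually_update_mem hU hw m] with x hx
      exact ih (hφ.of_le (by norm_cast; omega)) (hC.of_le (by norm_cast; omega)) hx
    rw [mixedPartial_insert_of_lt hlt, sum_allSetPartitions_insert hmt]
    refine ((HasDerivAt.fun_sum hterm).congr_of_eventuallyEq hexpand).deriv.trans
      (sum_congr rfl fun P hP => ?_)
    have hfree : ∀ M ∈ P, m ∉ M := fun M hM h => hmt (subset_of_mem_allSetPartitions hP hM h)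
    have hsingle : {m} ∉ P := fun h => hfree _ h (mem_singleton_self m)
    have hins : ∀ M ∈ P, insert m M ∉ P.erase M := fun M _ h =>
      hfree _ (mem_of_mem_erase h) (mem_insert_self m M)
    rw [card_insert_of_notMem hsingle, prod_insert hsingle, mixedPartial_singleton, mul_sum,
      ← mul_assoc]
    refine congrArg _ (sum_congr rfl fun M hM => ?_)
    rw [card_insert_of_notMem (hins M hM), card_erase_add_one hM, prod_insert (hins M hM),
      mixedPartial_insert_of_lt fun a ha => hlt a (subset_of_mem_allSetPartitions hP hM ha)]
    ring

theorem mixedPartial_pow_eq_sum_setPartitions (hU : IsOpen U) {s : Finset (Fin d)}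
    (hs : s.Nonempty) (n : ℕ) (hC : ContDiffOn ℝ s.card C U) {w : Fin d → ℝ} (hw : w ∈ U) :
    mixedPartial s (fun v => C v ^ n) w =
      ∑ j ∈ Icc 1 (min s.card n), (n.factorial : ℝ) / ((n - j).factorial : ℝ) * C w ^ (n - j) *
        ∑ P ∈ setPartitions s j, ∏ M ∈ P, mixedPartial M C w := by
  rw [mixedPartial_comp_eq_sum_allSetPartitions (φ := (· ^ n)) hU s (contDiff_id.pow n) hC hw,
    sum_allSetPartitions_eq_sum_Icc hs,
    ← sum_subset (Icc_subset_Icc_right (min_le_left _ n)) fun j hj hjn => ?_]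
  · refine sum_congr rfl fun j hj => ?_
    have hjn : j ≤ n := (mem_Icc.1 hj).2.trans (min_le_right _ n)
    have hfac : (n.descFactorial j : ℝ) = n.factorial / (n - j).factorial := by
      rw [eq_div_iff (by positivity), mul_comm]
      exact_mod_cast Nat.factorial_mul_descFactorial hjn
    rw [← hfac, mul_sum]
    refine sum_congr rfl fun P hP => ?_
    rw [setPartitions_eq_filter_card, mem_filter] at hP
    rw [hP.2, iteratedDeriv_pow]
  · have hnj : n < j := by simp only [mem_Icc] at hj hjn; omega
    refine sum_eq_zero fun P hP => ?_
    rw [setPartitions_eq_filter_card, mem_filter] at hP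
    rw [hP.2, iteratedDeriv_pow, Nat.descFactorial_of_lt hnj]
    simp

end FaaDiBruno

section CoordinatewiseChainRule

variable {d : ℕ}

theorem mixedPartial_comp_coordinatewise {ψ : ℝ → ℝ} {g : (Fin d → ℝ) → ℝ}
    {U W : Set (Fin d → ℝ)} (hU : IsOpen U) (hW : IsOpen W)
    (hWU : Set.MapsTo (fun v i => ψ (v i)) W U) (hψ : ∀ v ∈ W, ∀ i, DifferentiableAt ℝ ψ (v i))
    (s : Finset (Fin d)) (hg : ContDiffOn ℝ s.card g U) {v : Fin d → ℝ} (hv : v ∈ W) :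
    mixedPartial s (fun x => g (fun i => ψ (x i))) v =
      (∏ i ∈ s, deriv ψ (v i)) * mixedPartial s g (fun i => ψ (v i)) := by
  induction s using Finset.induction_on_min generalizing v with
  | empty => simp [mixedPartial_empty]
  | insert m t hlt ih =>
    have hmt : m ∉ t := fun h => lt_irrefl m (hlt m h)
    rw [card_insert_of_notMem hmt] at hg
    have hexpand : (fun x => mixedPartial t (fun y => g (fun i => ψ (y i)))
          (Function.update v m x)) =ᶠ[𝓝 (v m)] fun x => (∏ i ∈ t, deriv ψ (v i)) *
          mixedPartial t g (Function.update (fun i => ψ (v i)) m (ψ x)) := by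
      filter_upwards [eventually_update_mem hW hv m] with x hx
      rw [ih (hg.of_le (by norm_cast; omega)) hx]
      congr 1
      · exact prod_congr rfl fun i hi => by rw [Function.update_of_ne (ne_of_mem_of_not_mem hi hmt)]
      · exact congrArg (mixedPartial t g) (Function.comp_update ψ v m x)
    have hderiv := ((hasDerivAt_update_coordPartial m
      (differentiableAt_mixedPartial hU hg (Nat.lt_succ_self _) (hWU hv))).comp (v m)
        (hψ v hv m).hasDerivAt).const_mul (∏ i ∈ t, deriv ψ (v i))
    rw [mixedPartial_insert_of_lt hlt, mixedPartial_insert_of_lt hlt, prod_insert hmt]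
    exact (hderiv.congr_of_eventuallyEq hexpand).deriv.trans (by ring)

end CoordinatewiseChainRule

theorem blockMaxima_copula_density_general (d n : ℕ) (hd : 1 ≤ d)
    (C : (Fin d → ℝ) → ℝ)
    (U : Set (Fin d → ℝ)) (hU : IsOpen U) (hUsub : Set.Icc (0 : Fin d → ℝ) 1 ⊆ U)
    (hC : ContDiffOn ℝ d C U)
    (u : Fin d → ℝ) (hu : ∀ j, u j ∈ Set.Ioo (0:ℝ) 1) :
    iterPartial d (fun v => C (fun i => v i ^ ((1:ℝ)/n)) ^ n) u =
      (1 / (n : ℝ) ^ d) * (∏ j, u j) ^ ((1:ℝ)/n - 1) *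
        ∑ j ∈ Finset.Icc 1 (min d n),
          (n.factorial : ℝ) / ((n - j).factorial : ℝ) *
            C (fun i => u i ^ ((1:ℝ)/n)) ^ (n - j) *
            ∑ P ∈ setPartitions (Finset.univ : Finset (Fin d)) j,
              ∏ M ∈ P, mixedPartial M C (fun i => u i ^ ((1:ℝ)/n)) := by
  set W : Set (Fin d → ℝ) := Set.univ.pi fun _ => Set.Ioo 0 1
  have huW : u ∈ W := fun i _ => hu i
  have hWU : Set.MapsTo (fun v i => v i ^ ((1:ℝ)/n)) W U := fun v hv => hUsub
    ⟨fun i => Real.rpow_nonneg (hv i trivial).1.le _,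
      fun i => Real.rpow_le_one (hv i trivial).1.le (hv i trivial).2.le (by positivity)⟩
  have hroot : ∀ v ∈ W, ∀ i, DifferentiableAt ℝ (fun x : ℝ => x ^ ((1:ℝ)/n)) (v i) :=
    fun v hv i => (Real.hasDerivAt_rpow_const (Or.inl (hv i trivial).1.ne')).differentiableAt
  have hcard : (univ : Finset (Fin d)).card = d := by simp
  have hjacobian : ∏ i, deriv (fun x : ℝ => x ^ ((1:ℝ)/n)) (u i) =
      1 / (n : ℝ) ^ d * (∏ j, u j) ^ ((1:ℝ)/n - 1) := by
    simp_rw [Real.deriv_rpow_const]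
    rw [prod_mul_distrib, prod_const, hcard, one_div_pow,
      Real.finsetProd_rpow _ _ fun i _ => (hu i).1.le]
  rw [iterPartial_eq_mixedPartial_univ,
    mixedPartial_comp_coordinatewise (g := fun w => C w ^ n) hU
      (isOpen_set_pi Set.finite_univ fun _ _ => isOpen_Ioo) hWU hroot univ
      (by rw [hcard]; exact hC.pow n) huW,
    mixedPartial_pow_eq_sum_setPartitions hU (univ_nonempty_iff.2 ⟨⟨0, hd⟩⟩) n
      (by rwa [hcard]) (hWU huW), hcard, hjacobian]

/-- Theorem 1 of the paper: the `d`-fold mixed partial derivative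
`∂^d/∂u₁⋯∂u_d` of `u ↦ C(u₁^{1/n},…,u_d^{1/n})^n` — i.e. the copula density of the vector
of componentwise block-maxima of block-size `n` — equals
`n^{-d} (∏ⱼ uⱼ)^{1/n-1} ∑_{j=1}^{d∧n} (n!/(n-j)!) C(u^{1/n})^{n-j}
  ∑_{𝒫∈𝒮_{d,j}} ∏_{M∈𝒫} ∂_M C(u^{1/n})`. -/
theorem blockMaxima_copula_density (d n : ℕ) (hd : 1 ≤ d) (hn : 1 ≤ n)
    (C : (Fin d → ℝ) → ℝ)
    (U : Set (Fin d → ℝ)) (hU : IsOpen U) (hUsub : Set.Icc (0 : Fin d → ℝ) 1 ⊆ U)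
    (hC : ContDiffOn ℝ d C U)
    (u : Fin d → ℝ) (hu : ∀ j, u j ∈ Set.Ioo (0:ℝ) 1) :
    iterPartial d (fun v => C (fun i => v i ^ ((1:ℝ)/n)) ^ n) u =
      (1 / (n : ℝ) ^ d) * (∏ j, u j) ^ ((1:ℝ)/n - 1) *
        ∑ j ∈ Finset.Icc 1 (min d n),
          (n.factorial : ℝ) / ((n - j).factorial : ℝ) *
            C (fun i => u i ^ ((1:ℝ)/n)) ^ (n - j) *
            ∑ P ∈ setPartitions (Finset.univ : Finset (Fin d)) j,
              ∏ M ∈ P, mixedPartial M C (fun i => u i ^ ((1:ℝ)/n)) :=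
  blockMaxima_copula_density_general d n hd C U hU hUsub hC u hu

end
end

section
/- For all (u_1,u_2,u_3) ∈ [0,1]³, the three-dimensional vine copula satisfies C(u_1,u_2,u_3) = ∫_0^{u_2} C_{13;2}( C_{1|2}(u_1|v_2), C_{3|2}(u_3|v_2) ) dv_2. -/
noncomputable section

/-- The density of a bivariate copula: the mixed second partial derivative `∂²C/∂s∂t`. -/
def copDens (C : ℝ × ℝ → ℝ) (s t : ℝ) : ℝ :=
  deriv (fun a => deriv (fun b => C (a, b)) t) s

/-- The conditional distribution function `C_{1|2}(u₁|u₂) = ∂C₁₂(u₁,u₂)/∂u₂`. -/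
def cond12 (C12 : ℝ × ℝ → ℝ) (u1 u2 : ℝ) : ℝ :=
  deriv (fun b => C12 (u1, b)) u2

/-- The conditional distribution function `C_{3|2}(u₃|u₂) = ∂C₂₃(u₂,u₃)/∂u₂`. -/
def cond32 (C23 : ℝ × ℝ → ℝ) (u3 u2 : ℝ) : ℝ :=
  deriv (fun a => C23 (a, u3)) u2

/-- `∂₁C(x,y) = ∂C(x,y)/∂x`. -/
def pdFst (C : ℝ × ℝ → ℝ) (x y : ℝ) : ℝ := deriv (fun a => C (a, y)) x

/-- `∂₃C(x,y) = ∂C(x,y)/∂y` (derivative in the second argument). -/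
def pdSnd (C : ℝ × ℝ → ℝ) (x y : ℝ) : ℝ := deriv (fun b => C (x, b)) y

/-- The three-dimensional vine copula built from the pair copulas `C₁₂, C₂₃, C₁₃;₂`:
`C(u₁,u₂,u₃) = ∫₀^{u₁}∫₀^{u₂}∫₀^{u₃} c₁₂(v₁,v₂) c₂₃(v₂,v₃)
  c₁₃;₂(C_{1|2}(v₁|v₂), C_{3|2}(v₃|v₂)) dv₃ dv₂ dv₁`. -/
def vine (C12 C23 C132 : ℝ × ℝ → ℝ) (u1 u2 u3 : ℝ) : ℝ :=
  ∫ v1 in (0:ℝ)..u1, ∫ v2 in (0:ℝ)..u2, ∫ v3 in (0:ℝ)..u3,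
    copDens C12 v1 v2 * copDens C23 v2 v3 *
      copDens C132 (cond12 C12 v1 v2) (cond32 C23 v3 v2)

/-!
Integrate out `v₃` first. By the symmetry of second derivatives,
`∂/∂v₃ C_{3|2}(v₃|v₂) = c₂₃(v₂,v₃)`, so the `v₃`-integrand is the derivative of
`c₁₂(v₁,v₂) ∂₁C₁₃;₂(C_{1|2}(v₁|v₂), C_{3|2}(v₃|v₂))`, whose value at `v₃ = 0` vanishes by the
boundary conditions. The remaining integrand is continuous on the unit square, so Fubini swaps
the `v₁`- and `v₂`-integrals; since `∂/∂v₁ C_{1|2}(v₁|v₂) = c₁₂(v₁,v₂)`, the `v₁`-integrand is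
the derivative of `C₁₃;₂(C_{1|2}(v₁|v₂), C_{3|2}(u₃|v₂))`, which again vanishes at `v₁ = 0`.
-/

open Set Topology MeasureTheory intervalIntegral

section Slices

variable {E : Type*} [NormedAddCommGroup E] [NormedSpace ℝ E] {F : ℝ × ℝ → E}
  {F' : ℝ × ℝ →L[ℝ] E} {x y : ℝ}

theorem HasFDerivAt.hasDerivAt_fst_slice (h : HasFDerivAt F F' (x, y)) :
    HasDerivAt (fun a => F (a, y)) (F' (1, 0)) x :=
  h.comp_hasDerivAt x ((hasDerivAt_id x).prodMk (hasDerivAt_const x y))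

theorem HasFDerivAt.hasDerivAt_snd_slice (h : HasFDerivAt F F' (x, y)) :
    HasDerivAt (fun b => F (x, b)) (F' (0, 1)) y :=
  h.comp_hasDerivAt y ((hasDerivAt_const y x).prodMk (hasDerivAt_id y))

end Slices

theorem HasDerivAt.eq_zero_of_eqOn_zero {f : ℝ → ℝ} {f' x : ℝ} {s : Set ℝ}
    (hf : HasDerivAt f f' x) (hs : UniqueDiffWithinAt ℝ s x) (hx : x ∈ s) (h0 : EqOn f 0 s) :
    f' = 0 :=
  hs.eq_deriv s hf.hasDerivWithinAt ((hasDerivWithinAt_const x s 0).congr h0 (h0 hx))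

theorem integral_comp_mul_deriv_eq_sub {a b : ℝ} {f f' g g' : ℝ → ℝ} {s : Set ℝ}
    (hf : ∀ t ∈ uIcc a b, HasDerivAt f (f' t) t) (hf' : ContinuousOn f' (uIcc a b))
    (hfs : MapsTo f (uIcc a b) s) (hg : ∀ z ∈ s, HasDerivAt g (g' z) z)
    (hg' : ContinuousOn g' s) :
    ∫ t in a..b, g' (f t) * f' t = g (f b) - g (f a) :=
  integral_eq_sub_of_hasDerivAt (fun t ht => (hg _ (hfs ht)).comp t (hf t ht))
    ((hg'.comp (fun t ht => (hf t ht).continuousAt.continuousWithinAt) hfs).mul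
      hf').intervalIntegrable

theorem ContDiffAt.eventually_differentiableAt {𝕜 E F : Type*} [NontriviallyNormedField 𝕜]
    [NormedAddCommGroup E] [NormedSpace 𝕜 E] [NormedAddCommGroup F] [NormedSpace 𝕜 F]
    {f : E → F} {p : E} {n : ℕ} (h : ContDiffAt 𝕜 n f p) (hn : n ≠ 0) :
    ∀ᶠ q in 𝓝 p, DifferentiableAt 𝕜 f q :=
  (h.eventually (by simp)).mono fun _ hq => hq.differentiableAt (by exact_mod_cast hn)

section PartialDerivatives

variable {C : ℝ × ℝ → ℝ} {x y : ℝ}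

theorem cond12_eq_pdSnd (C : ℝ × ℝ → ℝ) : cond12 C = pdSnd C := rfl

theorem cond32_eq_pdFst (C : ℝ × ℝ → ℝ) (u3 u2 : ℝ) : cond32 C u3 u2 = pdFst C u2 u3 := rfl

theorem pdFst_eq_fderiv (h : DifferentiableAt ℝ C (x, y)) :
    pdFst C x y = fderiv ℝ C (x, y) (1, 0) :=
  h.hasFDerivAt.hasDerivAt_fst_slice.deriv

theorem pdSnd_eq_fderiv (h : DifferentiableAt ℝ C (x, y)) :
    pdSnd C x y = fderiv ℝ C (x, y) (0, 1) :=
  h.hasFDerivAt.hasDerivAt_snd_slice.deriv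

theorem hasDerivAt_pdFst (h : DifferentiableAt ℝ C (x, y)) :
    HasDerivAt (fun a => C (a, y)) (pdFst C x y) x := by
  rw [pdFst_eq_fderiv h]
  exact h.hasFDerivAt.hasDerivAt_fst_slice

theorem hasDerivAt_pdSnd (h : DifferentiableAt ℝ C (x, y)) :
    HasDerivAt (fun b => C (x, b)) (pdSnd C x y) y := by
  rw [pdSnd_eq_fderiv h]
  exact h.hasFDerivAt.hasDerivAt_snd_slice

theorem pdFst_eq_zero_of_eqOn {s : Set ℝ} (h : DifferentiableAt ℝ C (x, y))
    (hs : UniqueDiffWithinAt ℝ s x) (hx : x ∈ s) (h0 : ∀ a ∈ s, C (a, y) = 0) :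
    pdFst C x y = 0 :=
  (hasDerivAt_pdFst h).eq_zero_of_eqOn_zero hs hx h0

theorem pdSnd_eq_zero_of_eqOn {s : Set ℝ} (h : DifferentiableAt ℝ C (x, y))
    (hs : UniqueDiffWithinAt ℝ s y) (hy : y ∈ s) (h0 : ∀ b ∈ s, C (x, b) = 0) :
    pdSnd C x y = 0 :=
  (hasDerivAt_pdSnd h).eq_zero_of_eqOn_zero hs hy h0

theorem hasDerivAt_fderiv_apply_fst (h : ContDiffAt ℝ 2 C (x, y)) (w : ℝ × ℝ) :
    HasDerivAt (fun a => fderiv ℝ C (a, y) w) (fderiv ℝ (fderiv ℝ C) (x, y) (1, 0) w) x :=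
  (ContinuousLinearMap.apply ℝ ℝ w).hasFDerivAt.comp_hasDerivAt x
    ((h.fderiv_right one_add_one_eq_two.le).differentiableAt
      one_ne_zero).hasFDerivAt.hasDerivAt_fst_slice

theorem hasDerivAt_fderiv_apply_snd (h : ContDiffAt ℝ 2 C (x, y)) (w : ℝ × ℝ) :
    HasDerivAt (fun b => fderiv ℝ C (x, b) w) (fderiv ℝ (fderiv ℝ C) (x, y) (0, 1) w) y :=
  (ContinuousLinearMap.apply ℝ ℝ w).hasFDerivAt.comp_hasDerivAt y
    ((h.fderiv_right one_add_one_eq_two.le).differentiableAt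
      one_ne_zero).hasFDerivAt.hasDerivAt_snd_slice

theorem hasDerivAt_pdSnd_fst_fderiv (h : ContDiffAt ℝ 2 C (x, y)) :
    HasDerivAt (fun a => pdSnd C a y) (fderiv ℝ (fderiv ℝ C) (x, y) (1, 0) (0, 1)) x := by
  refine (hasDerivAt_fderiv_apply_fst h (0, 1)).congr_of_eventuallyEq ?_
  filter_upwards [(continuous_id.prodMk continuous_const).tendsto x
    |>.eventually (h.eventually_differentiableAt two_ne_zero)] with a ha
  exact pdSnd_eq_fderiv ha

theorem copDens_eq_fderiv_fderiv (h : ContDiffAt ℝ 2 C (x, y)) :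
    copDens C x y = fderiv ℝ (fderiv ℝ C) (x, y) (1, 0) (0, 1) :=
  (hasDerivAt_pdSnd_fst_fderiv h).deriv

theorem hasDerivAt_pdSnd_fst (h : ContDiffAt ℝ 2 C (x, y)) :
    HasDerivAt (fun a => pdSnd C a y) (copDens C x y) x := by
  rw [copDens_eq_fderiv_fderiv h]
  exact hasDerivAt_pdSnd_fst_fderiv h

theorem hasDerivAt_pdFst_snd (h : ContDiffAt ℝ 2 C (x, y)) :
    HasDerivAt (fun b => pdFst C x b) (copDens C x y) y := by
  rw [copDens_eq_fderiv_fderiv h, h.isSymmSndFDerivAt (by simp)]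
  refine (hasDerivAt_fderiv_apply_snd h (1, 0)).congr_of_eventuallyEq ?_
  filter_upwards [(continuous_const.prodMk continuous_id).tendsto y
    |>.eventually (h.eventually_differentiableAt two_ne_zero)] with b hb
  exact pdFst_eq_fderiv hb

end PartialDerivatives

section Continuity

variable {C : ℝ × ℝ → ℝ} {p : ℝ × ℝ} {x y : ℝ} {s : Set ℝ}

theorem continuousAt_pdFst (h : ContDiffAt ℝ 1 C p) :
    ContinuousAt (fun q : ℝ × ℝ => pdFst C q.1 q.2) p :=
  ((h.fderiv_right (m := 0) (zero_add 1).le).continuousAt.clm_apply continuousAt_const).congr <|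
    (h.eventually_differentiableAt one_ne_zero).mono fun _ hq => (pdFst_eq_fderiv hq).symm

theorem continuousAt_pdSnd (h : ContDiffAt ℝ 1 C p) :
    ContinuousAt (fun q : ℝ × ℝ => pdSnd C q.1 q.2) p :=
  ((h.fderiv_right (m := 0) (zero_add 1).le).continuousAt.clm_apply continuousAt_const).congr <|
    (h.eventually_differentiableAt one_ne_zero).mono fun _ hq => (pdSnd_eq_fderiv hq).symm

theorem continuousAt_copDens (h : ContDiffAt ℝ 2 C p) :
    ContinuousAt (fun q : ℝ × ℝ => copDens C q.1 q.2) p :=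
  ((((h.fderiv_right one_add_one_eq_two.le).fderiv_right (zero_add 1).le).continuousAt.clm_apply
      continuousAt_const).clm_apply continuousAt_const).congr <|
    (h.eventually (by simp)).mono fun _ hq => (copDens_eq_fderiv_fderiv hq).symm

theorem continuousOn_copDens_right (h : ∀ t ∈ s, ContDiffAt ℝ 2 C (x, t)) :
    ContinuousOn (copDens C x) s := fun t ht =>
  ((continuousAt_copDens (h t ht)).comp (f := fun b => (x, b))
    (continuousAt_const.prodMk continuousAt_id)).continuousWithinAt

theorem continuousOn_copDens_left (h : ∀ t ∈ s, ContDiffAt ℝ 2 C (t, y)) :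
    ContinuousOn (fun t => copDens C t y) s := fun t ht =>
  ((continuousAt_copDens (h t ht)).comp (f := fun a => (a, y))
    (continuousAt_id.prodMk continuousAt_const)).continuousWithinAt

theorem continuousOn_pdFst_left (h : ∀ t ∈ s, ContDiffAt ℝ 1 C (t, y)) :
    ContinuousOn (fun t => pdFst C t y) s := fun t ht =>
  ((continuousAt_pdFst (h t ht)).comp (f := fun a => (a, y))
    (continuousAt_id.prodMk continuousAt_const)).continuousWithinAt

end Continuity

section CopulaIntegrals

variable {C D : ℝ × ℝ → ℝ} {u v : ℝ}

theorem integral_copDens_mul_copDens_pdFst {x : ℝ} (hx : x ∈ Icc (0:ℝ) 1) (hv : v ∈ Icc (0:ℝ) 1)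
    (hu : u ∈ Icc (0:ℝ) 1) (hC : ∀ z ∈ Icc (0:ℝ) 1, ContDiffAt ℝ 2 C (x, z))
    (hD : ∀ t ∈ Icc (0:ℝ) 1, ContDiffAt ℝ 2 D (v, t))
    (hDI : MapsTo (pdFst D v) (Icc 0 1) (Icc 0 1)) (hC0 : ∀ a ∈ Icc (0:ℝ) 1, C (a, 0) = 0)
    (hD0 : ∀ a ∈ Icc (0:ℝ) 1, D (a, 0) = 0) :
    ∫ t in 0..u, copDens D v t * copDens C x (pdFst D v t) = pdFst C x (pdFst D v u) := by
  have h0 : (0:ℝ) ∈ Icc (0:ℝ) 1 := left_mem_Icc.2 zero_le_one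
  have hsub : uIcc 0 u ⊆ Icc (0:ℝ) 1 := uIcc_subset_Icc h0 hu
  have hCx0 : pdFst C x 0 = 0 := pdFst_eq_zero_of_eqOn ((hC 0 h0).differentiableAt two_ne_zero)
    (uniqueDiffOn_Icc zero_lt_one x hx) hx hC0
  have hDv0 : pdFst D v 0 = 0 := pdFst_eq_zero_of_eqOn ((hD 0 h0).differentiableAt two_ne_zero)
    (uniqueDiffOn_Icc zero_lt_one v hv) hv hD0
  simp_rw [mul_comm (copDens D v _)]
  rw [integral_comp_mul_deriv_eq_sub (g := pdFst C x)
    (fun t ht => hasDerivAt_pdFst_snd (hD t (hsub ht)))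
    (continuousOn_copDens_right fun t ht => hD t (hsub ht)) (hDI.mono_left hsub)
    (fun z hz => hasDerivAt_pdFst_snd (hC z hz)) (continuousOn_copDens_right hC), hDv0, hCx0,
    sub_zero]

theorem integral_copDens_mul_pdFst_pdSnd {y : ℝ} (hv : v ∈ Icc (0:ℝ) 1) (hu : u ∈ Icc (0:ℝ) 1)
    (hC : ∀ z ∈ Icc (0:ℝ) 1, ContDiffAt ℝ 1 C (z, y))
    (hD : ∀ t ∈ Icc (0:ℝ) 1, ContDiffAt ℝ 2 D (t, v))
    (hDI : MapsTo (fun t => pdSnd D t v) (Icc 0 1) (Icc 0 1)) (hC0 : C (0, y) = 0)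
    (hD0 : ∀ b ∈ Icc (0:ℝ) 1, D (0, b) = 0) :
    ∫ t in 0..u, copDens D t v * pdFst C (pdSnd D t v) y = C (pdSnd D u v, y) := by
  have h0 : (0:ℝ) ∈ Icc (0:ℝ) 1 := left_mem_Icc.2 zero_le_one
  have hsub : uIcc 0 u ⊆ Icc (0:ℝ) 1 := uIcc_subset_Icc h0 hu
  have hD0v : pdSnd D 0 v = 0 := pdSnd_eq_zero_of_eqOn ((hD 0 h0).differentiableAt two_ne_zero)
    (uniqueDiffOn_Icc zero_lt_one v hv) hv hD0
  simp_rw [mul_comm (copDens D _ v)]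
  rw [integral_comp_mul_deriv_eq_sub (g := fun z => C (z, y))
    (fun t ht => hasDerivAt_pdSnd_fst (hD t (hsub ht)))
    (continuousOn_copDens_left fun t ht => hD t (hsub ht)) (hDI.mono_left hsub)
    (fun z hz => hasDerivAt_pdFst ((hC z hz).differentiableAt one_ne_zero))
    (continuousOn_pdFst_left hC), hD0v, hC0, sub_zero]

theorem continuousAt_copDens_mul_pdFst_comp {E : ℝ × ℝ → ℝ} {q : ℝ × ℝ} {w : ℝ}
    (hD : ContDiffAt ℝ 2 D q) (hE : ContDiffAt ℝ 1 E (q.2, w))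
    (hC : ContDiffAt ℝ 1 C (pdSnd D q.1 q.2, pdFst E q.2 w)) :
    ContinuousAt (fun q : ℝ × ℝ => copDens D q.1 q.2 * pdFst C (pdSnd D q.1 q.2) (pdFst E q.2 w))
      q := by
  have hpdE : ContinuousAt (fun q : ℝ × ℝ => pdFst E q.2 w) q :=
    (continuousAt_pdFst hE).comp (f := fun q : ℝ × ℝ => (q.2, w))
      (continuousAt_snd.prodMk continuousAt_const)
  exact (continuousAt_copDens hD).mul <| (continuousAt_pdFst hC).comp
    (f := fun q : ℝ × ℝ => (pdSnd D q.1 q.2, pdFst E q.2 w))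
    ((continuousAt_pdSnd (hD.of_le one_le_two)).prodMk hpdE)

end CopulaIntegrals

/-- the vine copula satisfies C(u₁,u₂,u₃) = ∫₀^{u₂} C₁₃;₂(C_{1|2}(u₁|v₂), C_{3|2}(u₃|v₂)) dv₂. -/
theorem vine_eq_integral
    (C12 C23 C132 : ℝ × ℝ → ℝ)
    (U : Set (ℝ × ℝ)) (hU : IsOpen U)
    (hUsub : Set.Icc ((0 : ℝ), (0 : ℝ)) (1, 1) ⊆ U)
    (h12 : ContDiffOn ℝ 2 C12 U) (h23 : ContDiffOn ℝ 2 C23 U)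
    (h132 : ContDiffOn ℝ 2 C132 U)
    (hb12 : ∀ t ∈ Set.Icc (0:ℝ) 1, C12 (0, t) = 0 ∧ C12 (t, 0) = 0)
    (hb23 : ∀ t ∈ Set.Icc (0:ℝ) 1, C23 (0, t) = 0 ∧ C23 (t, 0) = 0)
    (hb132 : ∀ t ∈ Set.Icc (0:ℝ) 1, C132 (0, t) = 0 ∧ C132 (t, 0) = 0)
    (hr12 : ∀ u1 ∈ Set.Icc (0:ℝ) 1, ∀ u2 ∈ Set.Icc (0:ℝ) 1,
      cond12 C12 u1 u2 ∈ Set.Icc (0:ℝ) 1)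
    (hr32 : ∀ u3 ∈ Set.Icc (0:ℝ) 1, ∀ u2 ∈ Set.Icc (0:ℝ) 1,
      cond32 C23 u3 u2 ∈ Set.Icc (0:ℝ) 1)
    (u1 u2 u3 : ℝ) (hu1 : u1 ∈ Set.Icc (0:ℝ) 1) (hu2 : u2 ∈ Set.Icc (0:ℝ) 1)
    (hu3 : u3 ∈ Set.Icc (0:ℝ) 1) :
    vine C12 C23 C132 u1 u2 u3 =
      ∫ v2 in (0:ℝ)..u2, C132 (cond12 C12 u1 v2, cond32 C23 u3 v2) := by
  rw [vine]
  simp only [cond12_eq_pdSnd, cond32_eq_pdFst] at hr12 hr32 ⊢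
  have hreg : ∀ {C : ℝ × ℝ → ℝ}, ContDiffOn ℝ 2 C U →
      ∀ x ∈ Icc (0:ℝ) 1, ∀ y ∈ Icc (0:ℝ) 1, ContDiffAt ℝ 2 C (x, y) :=
    fun hC _ hx _ hy => hC.contDiffAt (hU.mem_nhds (hUsub ⟨⟨hx.1, hy.1⟩, hx.2, hy.2⟩))
  have hsub : ∀ {u : ℝ}, u ∈ Icc (0:ℝ) 1 → uIcc 0 u ⊆ Icc (0:ℝ) 1 :=
    uIcc_subset_Icc (left_mem_Icc.2 zero_le_one)
  set F : ℝ → ℝ → ℝ := fun v1 v2 =>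
    copDens C12 v1 v2 * pdFst C132 (pdSnd C12 v1 v2) (pdFst C23 v2 u3)
  have hF : ContinuousOn (Function.uncurry F) (Icc (0:ℝ) 1 ×ˢ Icc (0:ℝ) 1) := fun q hq =>
    ContinuousAt.continuousWithinAt <| continuousAt_copDens_mul_pdFst_comp
      (hreg h12 _ hq.1 _ hq.2) ((hreg h23 _ hq.2 _ hu3).of_le one_le_two)
      ((hreg h132 _ (hr12 _ hq.1 _ hq.2) _ (hr32 u3 hu3 _ hq.2)).of_le one_le_two)
  calc _ = ∫ v1 in 0..u1, ∫ v2 in 0..u2, F v1 v2 := by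
        refine integral_congr fun v1 hv1 => integral_congr fun v2 hv2 => ?_
        replace hv1 := hsub hu1 hv1
        replace hv2 := hsub hu2 hv2
        simp_rw [mul_assoc]
        rw [intervalIntegral.integral_const_mul, integral_copDens_mul_copDens_pdFst
          (hr12 v1 hv1 v2 hv2) hv2 hu3 (hreg h132 _ (hr12 v1 hv1 v2 hv2)) (hreg h23 v2 hv2)
          (fun t ht => hr32 t ht v2 hv2) (fun a ha => (hb132 a ha).2) (fun a ha => (hb23 a ha).2)]
    _ = ∫ v2 in 0..u2, ∫ v1 in 0..u1, F v1 v2 :=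
        intervalIntegral_intervalIntegral_swap <|
          (hF.integrableOn_compact (isCompact_Icc.prod isCompact_Icc)).mono_set <|
            prod_mono (uIoc_subset_uIcc.trans (hsub hu1)) (uIoc_subset_uIcc.trans (hsub hu2))
    _ = _ := by
        refine integral_congr fun v2 hv2 => ?_
        replace hv2 := hsub hu2 hv2
        exact integral_copDens_mul_pdFst_pdSnd hv2 hu1
          (fun z hz => (hreg h132 z hz _ (hr32 u3 hu3 v2 hv2)).of_le one_le_two)
          (fun t ht => hreg h12 t ht v2 hv2) (fun t ht => hr12 t ht v2 hv2)
          (hb132 _ (hr32 u3 hu3 v2 hv2)).1 (fun b hb => (hb12 b hb).1)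
end
end
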